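/- If f*_η is a global minimizer of the asymmetric-noise risk over a class F of classifiers and f* ∈ F, then ∫ ∑_{k ≠ y} (1 - η_y - η_{y k}) · (ℓ_rce(f* x, k) - ℓ_rce(f*_η x, k)) dμ(x, y) ≤ 0. -/
import Mathlib


open Finset MeasureTheory

/-- Clipped logarithm: `L t = Real.log t` for `t > 0` and `L 0 = A`. -/
noncomputable def clog (A : ℝ) (t : ℝ) : ℝ := if t = 0 then A else Real.log t

/-- One-hot vector at label `y`. -/
def onehot {K : ℕ} (y : Fin K) : Fin K → ℝ := fun k => if k = y then 1 else 0

/-- Reverse Cross Entropy loss with clipping constant `A`. -/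
noncomputable def rce {K : ℕ} (A : ℝ) (p : Fin K → ℝ) (y : Fin K) : ℝ :=
  -∑ k, p k * clog A (onehot y k)

/-- `p` is a probability vector. -/
def IsProbVec {K : ℕ} (p : Fin K → ℝ) : Prop := (∀ k, 0 ≤ p k) ∧ ∑ k, p k = 1

/-- A classifier: pointwise a probability vector, coordinatewise measurable. -/
def IsClassifier {𝒳 : Type*} [MeasurableSpace 𝒳] {K : ℕ} (f : 𝒳 → Fin K → ℝ) : Prop :=
  (∀ x, IsProbVec (f x)) ∧ ∀ k : Fin K, Measurable fun xy : 𝒳 × Fin K => f xy.1 k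

/-- Clean RCE risk `R(f) = ∫ ℓ_rce(f x, y) dμ(x, y)`. -/
noncomputable def cleanRisk {𝒳 : Type*} [MeasurableSpace 𝒳] {K : ℕ} (A : ℝ)
    (μ : Measure (𝒳 × Fin K)) (f : 𝒳 → Fin K → ℝ) : ℝ :=
  ∫ xy, rce A (f xy.1) xy.2 ∂μ

/-- Total noise rate of class `y`: `η_y = ∑_{k ≠ y} η_{y k}`. -/
def etaRow {K : ℕ} (η : Fin K → Fin K → ℝ) (y : Fin K) : ℝ :=
  ∑ k ∈ univ \ {y}, η y k

/-- Noisy RCE risk under class-dependent (asymmetric) label noise with rates `η_{y k}`. -/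
noncomputable def asymNoisyRisk {𝒳 : Type*} [MeasurableSpace 𝒳] {K : ℕ} (A : ℝ)
    (μ : Measure (𝒳 × Fin K)) (η : Fin K → Fin K → ℝ) (f : 𝒳 → Fin K → ℝ) : ℝ :=
  ∫ xy, ((1 - etaRow η xy.2) * rce A (f xy.1) xy.2
      + ∑ k ∈ univ \ {xy.2}, η xy.2 k * rce A (f xy.1) k) ∂μ

lemma sum_sdiff_prob {K : ℕ} {p : Fin K → ℝ} (hp : IsProbVec p) (y : Fin K) :
    ∑ k ∈ univ \ {y}, p k = 1 - p y := by
  rw [Finset.sum_sdiff_eq_sub (Finset.subset_univ _), hp.2, Finset.sum_singleton]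

lemma rce_eq {K : ℕ} (A : ℝ) {p : Fin K → ℝ} (hp : IsProbVec p) (y : Fin K) :
    rce A p y = A * (p y - 1) := by
  unfold rce
  rw [← Finset.sum_sdiff (Finset.subset_univ ({y} : Finset (Fin K)))]
  have h1 : ∑ k ∈ ({y} : Finset (Fin K)), p k * clog A (onehot y k) = 0 := by
    simp [onehot, clog]
  have h2 : ∑ k ∈ univ \ {y}, p k * clog A (onehot y k) = ∑ k ∈ univ \ {y}, p k * A := by
    refine Finset.sum_congr rfl fun k hk => ?_
    have hk' : k ≠ y := by simpa using (Finset.mem_sdiff.mp hk).2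
    simp [onehot, clog, hk']
  rw [h1, h2, ← Finset.sum_mul, sum_sdiff_prob hp]
  ring

lemma key {K : ℕ} (A : ℝ) (η : Fin K → Fin K → ℝ) {p q : Fin K → ℝ}
    (hp : IsProbVec p) (hq : IsProbVec q) (y : Fin K) :
    ∑ k ∈ univ \ {y}, (1 - etaRow η y - η y k) * (rce A p k - rce A q k)
      = ((1 - etaRow η y) * rce A q y + ∑ k ∈ univ \ {y}, η y k * rce A q k)
        - ((1 - etaRow η y) * rce A p y + ∑ k ∈ univ \ {y}, η y k * rce A p k) := by
  simp only [rce_eq A hp, rce_eq A hq]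
  have hL : ∀ k ∈ univ \ {y},
      (1 - etaRow η y - η y k) * (A * (p k - 1) - A * (q k - 1))
        = ((1 - etaRow η y) * A * p k - (1 - etaRow η y) * A * q k)
          - (A * (η y k * p k) - A * (η y k * q k)) := fun k _ => by ring
  have hR1 : ∀ k ∈ univ \ {y}, η y k * (A * (q k - 1)) = A * (η y k * q k) - A * η y k :=
    fun k _ => by ring
  have hR2 : ∀ k ∈ univ \ {y}, η y k * (A * (p k - 1)) = A * (η y k * p k) - A * η y k :=
    fun k _ => by ring
  rw [Finset.sum_congr rfl hL, Finset.sum_congr rfl hR1, Finset.sum_congr rfl hR2]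
  simp only [Finset.sum_sub_distrib, ← Finset.mul_sum, sum_sdiff_prob hp, sum_sdiff_prob hq]
  rw [show ∑ k ∈ univ \ {y}, η y k = etaRow η y from rfl]
  ring

lemma prob_le_one {K : ℕ} {p : Fin K → ℝ} (hp : IsProbVec p) (k : Fin K) : p k ≤ 1 := by
  rw [← hp.2]
  exact Finset.single_le_sum (fun j _ => hp.1 j) (Finset.mem_univ k)

/-- If `f*_η` is a global minimizer of the asymmetric-noise risk over a class `F` of
classifiers and `f* ∈ F`, then
`∫ ∑_{k ≠ y} (1 - η_y - η_{y k}) · (ℓ_rce(f* x, k) - ℓ_rce(f*_η x, k)) dμ(x, y) ≤ 0`. -/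
theorem asym_minimizer_inequality {𝒳 : Type*} [MeasurableSpace 𝒳] {K : ℕ} (hK : 2 ≤ K)
    (A : ℝ) (hA : A < 0) (μ : Measure (𝒳 × Fin K)) [IsProbabilityMeasure μ]
    (η : Fin K → Fin K → ℝ) (hη0 : ∀ y k, y ≠ k → 0 ≤ η y k)
    (hη1 : ∀ y, etaRow η y ≤ 1)
    (F : Set (𝒳 → Fin K → ℝ)) (hF : ∀ f ∈ F, IsClassifier f)
    (fstar : 𝒳 → Fin K → ℝ) (hfstar : fstar ∈ F)
    (fstarEta : 𝒳 → Fin K → ℝ) (hfstarEta : fstarEta ∈ F)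
    (hmin : ∀ f ∈ F, asymNoisyRisk A μ η fstarEta ≤ asymNoisyRisk A μ η f) :
    ∫ xy, ∑ k ∈ univ \ {xy.2}, (1 - etaRow η xy.2 - η xy.2 k)
        * (rce A (fstar xy.1) k - rce A (fstarEta xy.1) k) ∂μ ≤ 0 := by

  have hcl_star := hF fstar hfstar
  have hcl_eta := hF fstarEta hfstarEta
  -- abbreviation for the noisy-risk integrand
  set g : (𝒳 → Fin K → ℝ) → (𝒳 × Fin K) → ℝ := fun f xy =>
    (1 - etaRow η xy.2) * rce A (f xy.1) xy.2
      + ∑ k ∈ univ \ {xy.2}, η xy.2 k * rce A (f xy.1) k with hg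
  have hrow_nonneg : ∀ y, 0 ≤ etaRow η y := by
    intro y
    refine Finset.sum_nonneg fun k hk => ?_
    exact hη0 y k (by simpa [ne_comm] using (Finset.mem_sdiff.mp hk).2)
  -- integrability of g f for a classifier f
  have hint : ∀ f : 𝒳 → Fin K → ℝ, IsClassifier f → Integrable (g f) μ := by
    intro f hf
    have hmeas : Measurable (g f) := by
      apply measurable_from_prod_countable_left
      intro y
      have hfy : ∀ k : Fin K, Measurable fun x : 𝒳 => f x k := by
        intro k
        have hpair : Measurable fun x : 𝒳 => (x, y) :=
          measurable_id.prodMk measurable_const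
        exact (hf.2 k).comp hpair
      have hrce : ∀ k : Fin K, Measurable fun x : 𝒳 => rce A (f x) k := by
        intro k
        have : (fun x : 𝒳 => rce A (f x) k) = fun x => A * (f x k - 1) := by
          funext x; exact rce_eq A (hf.1 x) k
        rw [this]
        exact (measurable_const.mul ((hfy k).sub measurable_const))
      simp only [hg]
      exact (measurable_const.mul (hrce y)).add
        (Finset.measurable_sum _ fun k _ => measurable_const.mul (hrce k))
    have hbound : ∀ xy : 𝒳 × Fin K, ‖g f xy‖ ≤ |A| + |A| := by
      intro xy
      have hrb : ∀ k, |rce A (f xy.1) k| ≤ |A| := by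
        intro k
        rw [rce_eq A (hf.1 xy.1) k, abs_mul]
        have h1 : |f xy.1 k - 1| ≤ 1 := by
          rw [abs_le]
          constructor
          · linarith [(hf.1 xy.1).1 k]
          · linarith [prob_le_one (hf.1 xy.1) k]
        calc |A| * |f xy.1 k - 1| ≤ |A| * 1 := by
              exact mul_le_mul_of_nonneg_left h1 (abs_nonneg A)
          _ = |A| := mul_one _
      have h1 : |(1 - etaRow η xy.2) * rce A (f xy.1) xy.2| ≤ |A| := by
        rw [abs_mul]
        have : |1 - etaRow η xy.2| ≤ 1 := by
          rw [abs_le]; constructor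
          · linarith [hη1 xy.2]
          · linarith [hrow_nonneg xy.2]
        calc |1 - etaRow η xy.2| * |rce A (f xy.1) xy.2| ≤ 1 * |A| :=
              mul_le_mul this (hrb xy.2) (abs_nonneg _) zero_le_one
          _ = |A| := one_mul _
      have h2 : |∑ k ∈ univ \ {xy.2}, η xy.2 k * rce A (f xy.1) k| ≤ |A| := by
        calc |∑ k ∈ univ \ {xy.2}, η xy.2 k * rce A (f xy.1) k|
            ≤ ∑ k ∈ univ \ {xy.2}, |η xy.2 k * rce A (f xy.1) k| :=
              Finset.abs_sum_le_sum_abs _ _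
          _ ≤ ∑ k ∈ univ \ {xy.2}, η xy.2 k * |A| := by
              refine Finset.sum_le_sum fun k hk => ?_
              have hk' : xy.2 ≠ k := by
                have := (Finset.mem_sdiff.mp hk).2
                simp at this
                exact fun h => this h.symm
              rw [abs_mul, abs_of_nonneg (hη0 xy.2 k hk')]
              exact mul_le_mul_of_nonneg_left (hrb k) (hη0 xy.2 k hk')
          _ = etaRow η xy.2 * |A| := by rw [← Finset.sum_mul]; rfl
          _ ≤ 1 * |A| := mul_le_mul_of_nonneg_right (hη1 xy.2) (abs_nonneg A)
          _ = |A| := one_mul _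
      calc ‖g f xy‖ ≤ |(1 - etaRow η xy.2) * rce A (f xy.1) xy.2|
            + |∑ k ∈ univ \ {xy.2}, η xy.2 k * rce A (f xy.1) k| := abs_add_le _ _
        _ ≤ |A| + |A| := add_le_add h1 h2
    exact (integrable_const (|A| + |A|)).mono' hmeas.aestronglyMeasurable
      (Filter.Eventually.of_forall hbound)
  -- pointwise identity
  have hpt : ∀ xy : 𝒳 × Fin K,
      ∑ k ∈ univ \ {xy.2}, (1 - etaRow η xy.2 - η xy.2 k)
          * (rce A (fstar xy.1) k - rce A (fstarEta xy.1) k)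
        = g fstarEta xy - g fstar xy := fun xy =>
    key A η (hcl_star.1 xy.1) (hcl_eta.1 xy.1) xy.2
  calc ∫ xy, ∑ k ∈ univ \ {xy.2}, (1 - etaRow η xy.2 - η xy.2 k)
          * (rce A (fstar xy.1) k - rce A (fstarEta xy.1) k) ∂μ
      = ∫ xy, (g fstarEta xy - g fstar xy) ∂μ := by
        exact integral_congr_ae (Filter.Eventually.of_forall hpt)
    _ = (∫ xy, g fstarEta xy ∂μ) - ∫ xy, g fstar xy ∂μ :=
        integral_sub (hint fstarEta hcl_eta) (hint fstar hcl_star)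
    _ = asymNoisyRisk A μ η fstarEta - asymNoisyRisk A μ η fstar := rfl
    _ ≤ 0 := by linarith [hmin fstar hfstar]
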